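/- Under the hypotheses of the orthogonality relation — U_s : [0,∞) → ℝ C^∞ with U_s, U_s', U_s'' bounded; α > 0, ν > 0; c₁ ≠ c₂ in ℂ; ψ₁, ψ₂ : [0,∞) → ℂ C^4 with ψᵢ(0) = ψᵢ'(0) = 0 and |ψᵢ^{(k)}(z)| ≤ K e^{−δz} for 0 ≤ k ≤ 4; Orr_{c₁,α,ν}(ψ₁) = 0 and Orr^t_{c₂,α,ν}(ψ₂) = 0 — the associated velocity profiles are orthogonal: ∫₀^∞ ( ψ₁'(z)ψ₂'(z) + α² ψ₁(z)ψ₂(z) ) dz = 0. -/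

import Mathlib

/-!
With `Orr` acting on `ψ₁` and its formal adjoint `OrrT` on `ψ₂`, the Lagrange identity
`ψ₂ · Orr_{c₁} ψ₁ - ψ₁ · Orr^t_{c₂} ψ₂ = F' - (c₂ - c₁) (ψ₁'ψ₂' + α²ψ₁ψ₂)` holds for an explicit
bilinear concomitant `F = orrConcomitant`. For eigenfunctions the left side vanishes, so
`(c₂ - c₁) ∫₀^∞ (ψ₁'ψ₂' + α²ψ₁ψ₂) = F(∞) - F(0)`. Both boundary terms are zero: `F(0)` because
`ψᵢ(0) = ψᵢ'(0) = 0`, and `F(∞)` because the `ψᵢ` decay with their derivatives while `U_s`, `U_s'`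
stay bounded. Since `c₁ ≠ c₂`, the integral vanishes.
-/

open Complex MeasureTheory

noncomputable section

/-- The Orr–Sommerfeld operator. -/
def Orr (Us : ℝ → ℝ) (c : ℂ) (α ν : ℝ) (ψ : ℝ → ℂ) (z : ℝ) : ℂ :=
  ((Us z : ℂ) - c) * (iteratedDeriv 2 ψ z - (α : ℂ) ^ 2 * ψ z)
    - ((deriv (deriv Us) z : ℝ) : ℂ) * ψ z
    - (ν : ℂ) / (Complex.I * (α : ℂ)) *
        (iteratedDeriv 4 ψ z - 2 * (α : ℂ) ^ 2 * iteratedDeriv 2 ψ z + (α : ℂ) ^ 4 * ψ z)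

/-- The adjoint Orr–Sommerfeld operator
`Orr^t(ψ) = ((U_s − c)ψ)'' − α²(U_s − c)ψ − U_s''ψ − (ν/(iα))(ψ'''' − 2α²ψ'' + α⁴ψ)`. -/
def OrrT (Us : ℝ → ℝ) (c : ℂ) (α ν : ℝ) (ψ : ℝ → ℂ) (z : ℝ) : ℂ :=
  iteratedDeriv 2 (fun t => ((Us t : ℂ) - c) * ψ t) z
    - (α : ℂ) ^ 2 * ((Us z : ℂ) - c) * ψ z
    - ((deriv (deriv Us) z : ℝ) : ℂ) * ψ z
    - (ν : ℂ) / (Complex.I * (α : ℂ)) *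
        (iteratedDeriv 4 ψ z - 2 * (α : ℂ) ^ 2 * iteratedDeriv 2 ψ z + (α : ℂ) ^ 4 * ψ z)

open Filter Topology Set

theorem ContDiff.hasDerivAt_iteratedDeriv {𝕜 F : Type*} [NontriviallyNormedField 𝕜]
    [NormedAddCommGroup F] [NormedSpace 𝕜 F] {f : 𝕜 → F} {n : WithTop ℕ∞}
    (hf : ContDiff 𝕜 n f) {k : ℕ} (hk : (k : WithTop ℕ∞) < n) (x : 𝕜) :
    HasDerivAt (iteratedDeriv k f) (iteratedDeriv (k + 1) f x) x := by
  rw [iteratedDeriv_succ]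
  exact (hf.differentiable_iteratedDeriv k hk x).hasDerivAt

theorem ContDiff.hasDerivAt_deriv {𝕜 F : Type*} [NontriviallyNormedField 𝕜]
    [NormedAddCommGroup F] [NormedSpace 𝕜 F] {f : 𝕜 → F} {n : WithTop ℕ∞}
    (hf : ContDiff 𝕜 n f) (hn : 2 ≤ n) (x : 𝕜) :
    HasDerivAt (deriv f) (iteratedDeriv 2 f x) x := by
  simpa using hf.hasDerivAt_iteratedDeriv (k := 1) (lt_of_lt_of_le (by norm_cast) hn) x

theorem ContDiff.hasDerivAt_ofReal_comp {f : ℝ → ℝ} {n : WithTop ℕ∞} (hf : ContDiff ℝ n f)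
    (hn : 1 ≤ n) (x : ℝ) : HasDerivAt (fun t => (f t : ℂ)) ((deriv f x : ℝ) : ℂ) x :=
  (hf.differentiable (by positivity) x).hasDerivAt.ofReal_comp

theorem iteratedDeriv_two_ofReal_sub_const_mul {U : ℝ → ℝ} {ψ : ℝ → ℂ} (hU : ContDiff ℝ 2 U)
    (hψ : ContDiff ℝ 2 ψ) (c : ℂ) (z : ℝ) :
    iteratedDeriv 2 (fun t => ((U t : ℂ) - c) * ψ t) z =
      ((deriv (deriv U) z : ℝ) : ℂ) * ψ z + 2 * ((deriv U z : ℝ) : ℂ) * deriv ψ z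
        + ((U z : ℂ) - c) * iteratedDeriv 2 ψ z := by
  have hU' : ContDiff ℝ 1 (deriv U) := (contDiff_succ_iff_deriv.mp hU).2.2
  have hψ' (t : ℝ) : HasDerivAt ψ (deriv ψ t) t :=
    (hψ.differentiable (by norm_num) t).hasDerivAt
  have hderiv : deriv (fun t => ((U t : ℂ) - c) * ψ t) =
      fun t => ((deriv U t : ℝ) : ℂ) * ψ t + ((U t : ℂ) - c) * deriv ψ t :=
    funext fun t => (((hU.hasDerivAt_ofReal_comp one_le_two t).sub_const c).mul (hψ' t)).deriv
  rw [iteratedDeriv_succ, iteratedDeriv_one, hderiv]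
  refine ((((hU'.hasDerivAt_ofReal_comp le_rfl z).mul (hψ' z)).add
    (((hU.hasDerivAt_ofReal_comp one_le_two z).sub_const c).mul
      (hψ.hasDerivAt_deriv le_rfl z))).deriv).trans ?_
  ring

def orrConcomitant (Us : ℝ → ℝ) (c₁ c₂ : ℂ) (α ν : ℝ) (ψ₁ ψ₂ : ℝ → ℂ) (z : ℝ) : ℂ :=
  (c₂ - c₁) * (ψ₁ z * deriv ψ₂ z)
    + ((Us z : ℂ) - c₁) * (deriv ψ₁ z * ψ₂ z - ψ₁ z * deriv ψ₂ z)
    - ((deriv Us z : ℝ) : ℂ) * (ψ₁ z * ψ₂ z)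
    - (ν : ℂ) / (I * (α : ℂ)) *
        (iteratedDeriv 3 ψ₁ z * ψ₂ z - iteratedDeriv 2 ψ₁ z * deriv ψ₂ z
          + deriv ψ₁ z * iteratedDeriv 2 ψ₂ z - ψ₁ z * iteratedDeriv 3 ψ₂ z
          - 2 * (α : ℂ) ^ 2 * (deriv ψ₁ z * ψ₂ z - ψ₁ z * deriv ψ₂ z))

theorem hasDerivAt_orrConcomitant {Us : ℝ → ℝ} (hU : ContDiff ℝ 2 Us) (c₁ c₂ : ℂ) (α ν : ℝ)
    {ψ₁ ψ₂ : ℝ → ℂ} (hψ₁ : ContDiff ℝ 4 ψ₁) (hψ₂ : ContDiff ℝ 4 ψ₂) (z : ℝ) :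
    HasDerivAt (orrConcomitant Us c₁ c₂ α ν ψ₁ ψ₂)
      ((c₂ - c₁) * (deriv ψ₁ z * deriv ψ₂ z + (α : ℂ) ^ 2 * ψ₁ z * ψ₂ z)
        + ψ₂ z * Orr Us c₁ α ν ψ₁ z - ψ₁ z * OrrT Us c₂ α ν ψ₂ z) z := by
  have hU' : ContDiff ℝ 1 (deriv Us) := (contDiff_succ_iff_deriv.mp hU).2.2
  have u := hU.hasDerivAt_ofReal_comp one_le_two z
  have u' := hU'.hasDerivAt_ofReal_comp le_rfl z
  have p0 := (hψ₁.differentiable (by norm_num) z).hasDerivAt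
  have q0 := (hψ₂.differentiable (by norm_num) z).hasDerivAt
  have p1 := hψ₁.hasDerivAt_deriv (by norm_num) z
  have q1 := hψ₂.hasDerivAt_deriv (by norm_num) z
  have p2 := hψ₁.hasDerivAt_iteratedDeriv (k := 2) (by norm_num) z
  have q2 := hψ₂.hasDerivAt_iteratedDeriv (k := 2) (by norm_num) z
  have p3 := hψ₁.hasDerivAt_iteratedDeriv (k := 3) (by norm_num) z
  have q3 := hψ₂.hasDerivAt_iteratedDeriv (k := 3) (by norm_num) z
  have wronskian := (p1.mul q0).sub (p0.mul q1)
  have viscous := ((((p3.mul q0).sub (p2.mul q1)).add (p1.mul q2)).sub (p0.mul q3)).sub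
    (wronskian.const_mul (2 * (α : ℂ) ^ 2))
  refine (((((p0.mul q1).const_mul (c₂ - c₁)).add ((u.sub_const c₁).mul wronskian)).sub
    (u'.mul (p0.mul q0))).sub (viscous.const_mul ((ν : ℂ) / (I * (α : ℂ))))).congr_deriv ?_
  simp only [Orr, OrrT, Pi.mul_apply, Pi.sub_apply,
    iteratedDeriv_two_ofReal_sub_const_mul hU (hψ₂.of_le (by norm_num))]
  ring

theorem tendsto_atTop_zero_of_norm_le_exp {E : Type*} [NormedAddCommGroup E] {f : ℝ → E}
    {K δ : ℝ} (hδ : 0 < δ) (hf : ∀ z : ℝ, 0 ≤ z → ‖f z‖ ≤ K * Real.exp (-δ * z)) :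
    Tendsto f atTop (𝓝 0) := by
  have hexp : Tendsto (fun z => K * Real.exp (-δ * z)) atTop (𝓝 0) := by
    simpa [neg_mul] using
      (Real.tendsto_exp_neg_atTop_nhds_zero.comp (tendsto_id.const_mul_atTop hδ)).const_mul K
  exact squeeze_zero_norm' (eventually_ge_atTop 0 |>.mono hf) hexp

theorem integrableOn_Ioi_mul_of_norm_le_exp {f g : ℝ → ℂ} (hf : Continuous f)
    (hg : Continuous g) {K δ : ℝ} (hδ : 0 < δ)
    (hfK : ∀ z : ℝ, 0 ≤ z → ‖f z‖ ≤ K * Real.exp (-δ * z))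
    (hgK : ∀ z : ℝ, 0 ≤ z → ‖g z‖ ≤ K * Real.exp (-δ * z)) :
    IntegrableOn (fun z => f z * g z) (Ioi 0) := by
  have hbound : IntegrableOn (fun z => K * K * Real.exp (-(2 * δ) * z)) (Ioi 0) := by
    simpa [neg_mul, IntegrableOn] using
      (exp_neg_integrableOn_Ioi 0 (by positivity)).const_mul (K * K)
  refine hbound.mono' (hf.mul hg).aestronglyMeasurable ?_
  filter_upwards [ae_restrict_mem measurableSet_Ioi] with z hz
  have hf' := hfK z (le_of_lt hz)
  calc ‖f z * g z‖ = ‖f z‖ * ‖g z‖ := norm_mul _ _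
    _ ≤ K * Real.exp (-δ * z) * (K * Real.exp (-δ * z)) :=
      mul_le_mul hf' (hgK z (le_of_lt hz)) (norm_nonneg _) ((norm_nonneg _).trans hf')
    _ = K * K * Real.exp (-(2 * δ) * z) := by
      rw [mul_mul_mul_comm, ← Real.exp_add]; ring_nf

theorem isBoundedUnder_norm_ofReal_sub {ι : Type*} {l : Filter ι} {f : ι → ℝ} {M : ℝ}
    (hf : ∀ᶠ x in l, |f x| ≤ M) (c : ℂ) :
    IsBoundedUnder (· ≤ ·) l (norm ∘ fun x => (f x : ℂ) - c) := by
  refine isBoundedUnder_of_eventually_le (a := M + ‖c‖) ?_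
  filter_upwards [hf] with x hx
  calc ‖(f x : ℂ) - c‖ ≤ ‖(f x : ℂ)‖ + ‖c‖ := norm_sub_le _ _
    _ ≤ M + ‖c‖ := by rw [norm_real, Real.norm_eq_abs]; linarith

theorem tendsto_orrConcomitant_atTop {Us : ℝ → ℝ} (c₁ c₂ : ℂ) (α ν : ℝ) {ψ₁ ψ₂ : ℝ → ℂ}
    (hU : IsBoundedUnder (· ≤ ·) atTop (norm ∘ fun z => (Us z : ℂ) - c₁))
    (hU' : IsBoundedUnder (· ≤ ·) atTop (norm ∘ fun z => ((deriv Us z : ℝ) : ℂ)))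
    (hψ₁ : ∀ k ≤ 3, Tendsto (iteratedDeriv k ψ₁) atTop (𝓝 0))
    (hψ₂ : ∀ k ≤ 3, Tendsto (iteratedDeriv k ψ₂) atTop (𝓝 0)) :
    Tendsto (orrConcomitant Us c₁ c₂ α ν ψ₁ ψ₂) atTop (𝓝 0) := by
  have p0 : Tendsto ψ₁ atTop (𝓝 0) := by simpa using hψ₁ 0 (by norm_num)
  have q0 : Tendsto ψ₂ atTop (𝓝 0) := by simpa using hψ₂ 0 (by norm_num)
  have p1 : Tendsto (deriv ψ₁) atTop (𝓝 0) := by simpa using hψ₁ 1 (by norm_num)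
  have q1 : Tendsto (deriv ψ₂) atTop (𝓝 0) := by simpa using hψ₂ 1 (by norm_num)
  have wronskian := (p1.mul q0).sub (p0.mul q1)
  have viscous := ((((hψ₁ 3 le_rfl).mul q0).sub ((hψ₁ 2 (by norm_num)).mul q1)).add
    (p1.mul (hψ₂ 2 (by norm_num)))).sub (p0.mul (hψ₂ 3 le_rfl))
  have := ((((p0.mul q1).const_mul (c₂ - c₁)).add
    (isBoundedUnder_le_mul_tendsto_zero hU (by simpa using wronskian))).sub
      (isBoundedUnder_le_mul_tendsto_zero hU' (by simpa using p0.mul q0))).sub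
        ((viscous.sub (wronskian.const_mul (2 * (α : ℂ) ^ 2))).const_mul
          ((ν : ℂ) / (I * (α : ℂ))))
  simp only [mul_zero, add_zero, sub_zero] at this
  exact this

theorem orr_adjoint_velocity_orthogonality_general
    (Us : ℝ → ℝ) (hUs : ContDiff ℝ (⊤ : ℕ∞) Us)
    (MU : ℝ) (hUb : ∀ z : ℝ, 0 ≤ z →
      |Us z| ≤ MU ∧ |deriv Us z| ≤ MU ∧ |deriv (deriv Us) z| ≤ MU)
    (α ν : ℝ) (c₁ c₂ : ℂ) (hc : c₁ ≠ c₂)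
    (ψ₁ ψ₂ : ℝ → ℂ) (hψ₁ : ContDiff ℝ 4 ψ₁) (hψ₂ : ContDiff ℝ 4 ψ₂)
    (hψ₁0 : ψ₁ 0 = 0) (hψ₁'0 : deriv ψ₁ 0 = 0)
    (hψ₂0 : ψ₂ 0 = 0) (hψ₂'0 : deriv ψ₂ 0 = 0)
    (K δ : ℝ) (hδ : 0 < δ)
    (hdec₁ : ∀ k ≤ 4, ∀ z : ℝ, 0 ≤ z →
      ‖iteratedDeriv k ψ₁ z‖ ≤ K * Real.exp (-δ * z))
    (hdec₂ : ∀ k ≤ 4, ∀ z : ℝ, 0 ≤ z →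
      ‖iteratedDeriv k ψ₂ z‖ ≤ K * Real.exp (-δ * z))
    (heig₁ : ∀ z : ℝ, 0 ≤ z → Orr Us c₁ α ν ψ₁ z = 0)
    (heig₂ : ∀ z : ℝ, 0 ≤ z → OrrT Us c₂ α ν ψ₂ z = 0) :
    ∫ z in Set.Ici (0 : ℝ),
        (deriv ψ₁ z * deriv ψ₂ z + (α : ℂ) ^ 2 * ψ₁ z * ψ₂ z) = 0 := by
  have hU : ContDiff ℝ 2 Us := hUs.of_le (WithTop.coe_le_coe.mpr le_top)
  have hderiv := hasDerivAt_orrConcomitant hU c₁ c₂ α ν hψ₁ hψ₂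
  have hF0 : orrConcomitant Us c₁ c₂ α ν ψ₁ ψ₂ 0 = 0 := by
    simp [orrConcomitant, hψ₁0, hψ₁'0, hψ₂0, hψ₂'0]
  have hUbdd : ∀ᶠ z in atTop, |Us z| ≤ MU :=
    (eventually_ge_atTop 0).mono fun z hz => (hUb z hz).1
  have hU'bdd : ∀ᶠ z in atTop, |deriv Us z| ≤ MU :=
    (eventually_ge_atTop 0).mono fun z hz => (hUb z hz).2.1
  have hFlim := tendsto_orrConcomitant_atTop c₁ c₂ α ν (isBoundedUnder_norm_ofReal_sub hUbdd c₁)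
    (by simpa using isBoundedUnder_norm_ofReal_sub hU'bdd 0)
    (fun k hk => tendsto_atTop_zero_of_norm_le_exp hδ (hdec₁ k (by omega)))
    (fun k hk => tendsto_atTop_zero_of_norm_le_exp hδ (hdec₂ k (by omega)))
  have hint : IntegrableOn (fun z => deriv ψ₁ z * deriv ψ₂ z + (α : ℂ) ^ 2 * ψ₁ z * ψ₂ z)
      (Ioi 0) := by
    have h0 := integrableOn_Ioi_mul_of_norm_le_exp hψ₁.continuous hψ₂.continuous hδ
      (by simpa using hdec₁ 0 (by norm_num)) (by simpa using hdec₂ 0 (by norm_num))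
    have h1 := integrableOn_Ioi_mul_of_norm_le_exp (hψ₁.continuous_deriv (by norm_num))
      (hψ₂.continuous_deriv (by norm_num)) hδ
      (by simpa using hdec₁ 1 (by norm_num)) (by simpa using hdec₂ 1 (by norm_num))
    simpa only [mul_assoc, Pi.add_def] using h1.add (h0.const_mul ((α : ℂ) ^ 2))
  have hFTC := integral_Ioi_of_hasDerivAt_of_tendsto (hderiv 0).continuousAt.continuousWithinAt
    (fun z hz => by simpa [heig₁ z (le_of_lt hz), heig₂ z (le_of_lt hz)] using hderiv z)
    (hint.const_mul (c₂ - c₁)) hFlim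
  rw [integral_const_mul, hF0, sub_zero] at hFTC
  rw [integral_Ici_eq_integral_Ioi]
  exact (mul_eq_zero.mp hFTC).resolve_left (sub_ne_zero.mpr hc.symm)

/-- eigenfunctions of `Orr` and of `Orr^t` with distinct wave speeds have
orthogonal velocity profiles: `∫₀^∞ (ψ₁'ψ₂' + α²ψ₁ψ₂) = 0`. -/
theorem orr_adjoint_velocity_orthogonality
    (Us : ℝ → ℝ) (hUs : ContDiff ℝ (⊤ : ℕ∞) Us)
    (MU : ℝ) (hUb : ∀ z : ℝ, 0 ≤ z →
      |Us z| ≤ MU ∧ |deriv Us z| ≤ MU ∧ |deriv (deriv Us) z| ≤ MU)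
    (α ν : ℝ) (hα : 0 < α) (hν : 0 < ν) (c₁ c₂ : ℂ) (hc : c₁ ≠ c₂)
    (ψ₁ ψ₂ : ℝ → ℂ) (hψ₁ : ContDiff ℝ 4 ψ₁) (hψ₂ : ContDiff ℝ 4 ψ₂)
    (hψ₁0 : ψ₁ 0 = 0) (hψ₁'0 : deriv ψ₁ 0 = 0)
    (hψ₂0 : ψ₂ 0 = 0) (hψ₂'0 : deriv ψ₂ 0 = 0)
    (K δ : ℝ) (hK : 0 < K) (hδ : 0 < δ)
    (hdec₁ : ∀ k ≤ 4, ∀ z : ℝ, 0 ≤ z →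
      ‖iteratedDeriv k ψ₁ z‖ ≤ K * Real.exp (-δ * z))
    (hdec₂ : ∀ k ≤ 4, ∀ z : ℝ, 0 ≤ z →
      ‖iteratedDeriv k ψ₂ z‖ ≤ K * Real.exp (-δ * z))
    (heig₁ : ∀ z : ℝ, 0 ≤ z → Orr Us c₁ α ν ψ₁ z = 0)
    (heig₂ : ∀ z : ℝ, 0 ≤ z → OrrT Us c₂ α ν ψ₂ z = 0) :
    ∫ z in Set.Ici (0 : ℝ),
        (deriv ψ₁ z * deriv ψ₂ z + (α : ℂ) ^ 2 * ψ₁ z * ψ₂ z) = 0 :=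
  orr_adjoint_velocity_orthogonality_general Us hUs MU hUb α ν c₁ c₂ hc ψ₁ ψ₂ hψ₁ hψ₂ hψ₁0 hψ₁'0
    hψ₂0 hψ₂'0 K δ hδ hdec₁ hdec₂ heig₁ heig₂
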